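/- arXiv:1703.05309 — 2 statements merged into one kernel-verified Lean document; each statement's English description precedes it below -/
import Mathlib

section
/- Let m and n be positive integers with n ≤ m, and let U be an m × m unitary matrix over ℂ. Then ∫_{ℂ^m} exp(−2 ∑_{j=1}^m |α_j|²) · ∏_{j=1}^n (4·|∑_{k=1}^m α_k U_{k,j}|² − 1) · ∏_{j=1}^n (|α_j|² − 1/2) d²α = ∫_{ℂ^m} exp(−2 ∑_{j=1}^m |α_j|²) · ∏_{j=1}^n (4·|∑_{k=1}^n α_k U_{k,j}|² − 1) · ∏_{j=1}^n (|α_j|² − 1/2) d²α; that is, in the inner sums the range of k may be truncated from m to n without changing the value of the integral. -/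
/-!
Expanding every factor `a * ‖∑ i, α i * B j i‖ ^ 2 - c` turns the integrand into a sum of
monomials `∏ i, α i ^ p i * conj (α i) ^ q i` times a product of radial weights, one per
coordinate, so by Fubini the integral is a sum of products of one-variable moments. Rotation
invariance kills every moment with `p i ≠ q i`, and `∫ (‖z‖² - 1/b) e^{-b‖z‖²} = 0` kills the
moment with `p i = q i = 0` of each coordinate `e j`. The factors have total degree at most
`card κ` in `α`, so a surviving monomial uses only the coordinates `e j`: the coefficients
`B j i` with `i` outside the range of `e` never contribute.
-/

open MeasureTheory ComplexConjugate Finset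

theorem integral_radial_mul_pow_mul_conj_pow_eq_zero (g : ℝ → ℂ) {p q : ℕ} (hpq : p ≠ q) :
    ∫ z : ℂ, g ‖z‖ * (z ^ p * conj z ^ q) = 0 := by
  set ω := Circle.exp (Real.pi / ((p : ℝ) - q))
  -- rotating by `ω` multiplies the integrand by `ω ^ (p - q) = -1`
  have hω : (ω : ℂ) ^ p * conj (ω : ℂ) ^ q = -1 := by
    have hpq' : (p : ℂ) - q ≠ 0 := sub_ne_zero.mpr (Nat.cast_injective.ne hpq)
    rw [Circle.coe_exp, ← Complex.exp_conj, ← Complex.exp_nat_mul, ← Complex.exp_nat_mul,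
      ← Complex.exp_add, ← Complex.exp_pi_mul_I]
    congr 1
    simp only [map_mul, Complex.conj_ofReal, Complex.conj_I]
    push_cast
    field_simp
    ring
  have hrot := (rotation ω).measurePreserving.integral_comp
    (rotation ω).toHomeomorph.measurableEmbedding (fun z : ℂ => g ‖z‖ * (z ^ p * conj z ^ q))
  simp only [rotation_apply, norm_mul, Circle.norm_coe, one_mul, mul_pow, map_mul] at hrot
  have hself : ∫ z : ℂ, g ‖z‖ * (z ^ p * conj z ^ q) = -∫ z : ℂ, g ‖z‖ * (z ^ p * conj z ^ q) := by
    conv_rhs => rw [← hrot]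
    rw [← integral_neg]
    congr 1 with z
    linear_combination (g ‖z‖ * (z ^ p * conj z ^ q)) * hω
  exact self_eq_neg.mp hself

theorem integral_norm_pow_mul_exp_neg_mul_sq {b : ℝ} (hb : 0 < b) (k : ℕ) :
    ∫ z : ℂ, ‖z‖ ^ k * Real.exp (-b * ‖z‖ ^ 2) =
      Real.pi * b ^ (-((k + 2 : ℝ) / 2)) * Real.Gamma ((k + 2) / 2) := by
  have h := Complex.integral_rpow_mul_exp_neg_mul_rpow (p := 2) (q := k) one_le_two
    (by linarith [(k.cast_nonneg : (0 : ℝ) ≤ k)]) hb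
  simp only [Real.rpow_natCast, Real.rpow_two] at h
  rw [h]
  ring_nf

theorem integrable_norm_pow_mul_exp_neg_mul_sq {b : ℝ} (hb : 0 < b) (k : ℕ) :
    Integrable (fun z : ℂ => ‖z‖ ^ k * Real.exp (-b * ‖z‖ ^ 2)) := by
  refine Integrable.of_integral_ne_zero ?_
  rw [integral_norm_pow_mul_exp_neg_mul_sq hb]
  have := Real.Gamma_pos_of_pos (s := (k + 2 : ℝ) / 2) (by positivity)
  have := Real.rpow_pos_of_pos hb (-((k + 2 : ℝ) / 2))
  positivity

theorem integral_norm_sq_sub_inv_mul_exp_neg_mul_sq {b : ℝ} (hb : 0 < b) :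
    ∫ z : ℂ, (‖z‖ ^ 2 - 1 / b) * Real.exp (-b * ‖z‖ ^ 2) = 0 := by
  have h0 := integral_norm_pow_mul_exp_neg_mul_sq hb 0
  have i0 := integrable_norm_pow_mul_exp_neg_mul_sq hb 0
  simp only [pow_zero, one_mul] at h0 i0
  simp only [sub_mul]
  rw [integral_sub (integrable_norm_pow_mul_exp_neg_mul_sq hb 2) (i0.const_mul _),
    integral_const_mul, integral_norm_pow_mul_exp_neg_mul_sq hb 2, h0]
  norm_num [Real.rpow_neg_one]
  ring

section Moments

variable {ι : Type*} [DecidableEq ι]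

noncomputable def radialWeight (b : ℝ) (S : Finset ι) (i : ι) (r : ℝ) : ℝ :=
  (if i ∈ S then r ^ 2 - 1 / b else 1) * Real.exp (-b * r ^ 2)

noncomputable def coordMoment (b : ℝ) (S : Finset ι) (i : ι) (p q : ℕ) : ℂ :=
  ∫ z : ℂ, (radialWeight b S i ‖z‖ : ℂ) * (z ^ p * conj z ^ q)

theorem coordMoment_eq_zero_of_ne (b : ℝ) (S : Finset ι) (i : ι) {p q : ℕ} (hpq : p ≠ q) :
    coordMoment b S i p q = 0 :=
  integral_radial_mul_pow_mul_conj_pow_eq_zero (fun r => (radialWeight b S i r : ℂ)) hpq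

theorem coordMoment_zero_zero_of_mem {b : ℝ} (hb : 0 < b) {S : Finset ι} {i : ι} (hi : i ∈ S) :
    coordMoment b S i 0 0 = 0 := by
  simp only [coordMoment, pow_zero, mul_one, radialWeight, if_pos hi]
  rw [integral_complex_ofReal, integral_norm_sq_sub_inv_mul_exp_neg_mul_sq hb, Complex.ofReal_zero]

theorem integrable_radialWeight_mul_pow_mul_conj_pow {b : ℝ} (hb : 0 < b) (S : Finset ι) (i : ι)
    (p q : ℕ) : Integrable (fun z : ℂ => (radialWeight b S i ‖z‖ : ℂ) * (z ^ p * conj z ^ q)) := by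
  have hcont : Continuous (fun z : ℂ => (radialWeight b S i ‖z‖ : ℂ) * (z ^ p * conj z ^ q)) := by
    unfold radialWeight
    split_ifs <;> fun_prop
  refine Integrable.mono' ((integrable_norm_pow_mul_exp_neg_mul_sq hb (p + q + 2)).add
    ((integrable_norm_pow_mul_exp_neg_mul_sq hb (p + q)).const_mul (1 / b + 1)))
    hcont.aestronglyMeasurable (Filter.Eventually.of_forall fun z => ?_)
  have hfactor : |if i ∈ S then ‖z‖ ^ 2 - 1 / b else 1| ≤ ‖z‖ ^ 2 + (1 / b + 1) := by
    have : 0 ≤ ‖z‖ ^ 2 := by positivity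
    have : 0 < 1 / b := by positivity
    split_ifs
    · rw [abs_le]
      constructor <;> linarith
    · rw [abs_one]
      linarith
  simp only [norm_mul, norm_pow, Complex.norm_real, Complex.norm_conj, radialWeight,
    Real.norm_eq_abs, Real.abs_exp]
  calc |if i ∈ S then ‖z‖ ^ 2 - 1 / b else 1| * Real.exp (-b * ‖z‖ ^ 2) * (‖z‖ ^ p * ‖z‖ ^ q)
      ≤ (‖z‖ ^ 2 + (1 / b + 1)) * Real.exp (-b * ‖z‖ ^ 2) * (‖z‖ ^ p * ‖z‖ ^ q) := by
        gcongr
    _ = _ := by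
        simp only [Pi.add_apply]
        ring

end Moments

section Expansion

variable {ι κ : Type*} [Fintype ι] [Fintype κ]

noncomputable def gaussianFormIntegrand (b a c : ℝ) (e : κ ↪ ι) (s : κ → (ι → ℂ) → ℂ)
    (α : ι → ℂ) : ℝ :=
  Real.exp (-b * ∑ i, ‖α i‖ ^ 2) * (∏ j, (a * ‖s j α‖ ^ 2 - c)) * ∏ j, (‖α (e j)‖ ^ 2 - 1 / b)

/-- Indexes the terms of `a * ‖∑ i, α i * v i‖ ^ 2 - c`: `none` is the constant `-c`, and
`some (k, l)` is `a * v k * conj (v l)` times the monomial `α k * conj (α l)`. -/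
def termCoeff (a c : ℝ) (v : ι → ℂ) : Option (ι × ι) → ℂ
  | none => -c
  | some (k, l) => a * v k * conj (v l)

def termMonomial (α : ι → ℂ) : Option (ι × ι) → ℂ
  | none => 1
  | some (k, l) => α k * conj (α l)

theorem ofReal_mul_norm_sq_sub_eq_sum (a c : ℝ) (v α : ι → ℂ) :
    ((a * ‖∑ i, α i * v i‖ ^ 2 - c : ℝ) : ℂ) = ∑ o, termCoeff a c v o * termMonomial α o := by
  rw [Fintype.sum_option, Fintype.sum_prod_type]
  simp only [termCoeff, termMonomial]
  push_cast
  rw [← Complex.mul_conj', map_sum, sum_mul_sum, mul_sum, sub_eq_add_neg, add_comm, mul_one]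
  congr 1
  refine sum_congr rfl fun k _ => ?_
  rw [mul_sum]
  refine sum_congr rfl fun l _ => ?_
  simp only [map_mul]
  ring

variable [DecidableEq ι]

theorem prod_option_elim_eq_prod_pow {M : Type*} [CommMonoid M] (g : κ → Option ι) (v : ι → M) :
    ∏ j, (g j).elim 1 v = ∏ i, v i ^ #{j | g j = some i} := by
  rw [← prod_fiberwise univ g, Fintype.prod_option]
  have hfiber : ∀ o : Option ι,
      ∏ j ∈ univ with g j = o, (g j).elim 1 v = o.elim 1 v ^ #{j | g j = o} := by
    intro o
    rw [prod_congr rfl fun j hj => by rw [(mem_filter.mp hj).2], prod_const]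
  simp only [hfiber, Option.elim_none, one_pow, one_mul, Option.elim_some]

def choiceDeg (π : ι × ι → ι) (F : κ → Option (ι × ι)) (i : ι) : ℕ :=
  #{j | (F j).map π = some i}

theorem prod_termMonomial (α : ι → ℂ) (F : κ → Option (ι × ι)) :
    ∏ j, termMonomial α (F j) =
      ∏ i, α i ^ choiceDeg Prod.fst F i * conj (α i) ^ choiceDeg Prod.snd F i := by
  have hsplit : ∀ o : Option (ι × ι),
      termMonomial α o = (o.map Prod.fst).elim 1 α * (o.map Prod.snd).elim 1 (conj ∘ α) := by
    rintro (_ | ⟨k, l⟩) <;> simp [termMonomial]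
  simp only [hsplit, prod_mul_distrib, prod_option_elim_eq_prod_pow, choiceDeg,
    Function.comp_apply]

theorem exp_mul_prod_eq_prod_radialWeight (b : ℝ) (e : κ ↪ ι) (α : ι → ℂ) :
    Real.exp (-b * ∑ i, ‖α i‖ ^ 2) * ∏ j, (‖α (e j)‖ ^ 2 - 1 / b) =
      ∏ i, radialWeight b (univ.map e) i ‖α i‖ := by
  simp only [radialWeight, prod_mul_distrib, prod_ite_mem, univ_inter, prod_map, mul_sum,
    Real.exp_sum]
  ring

variable [DecidableEq κ]

theorem ofReal_gaussianFormIntegrand_eq_sum (b a c : ℝ) (e : κ ↪ ι) (B : κ → ι → ℂ)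
    (α : ι → ℂ) :
    (gaussianFormIntegrand b a c e (fun j α => ∑ i, α i * B j i) α : ℂ) =
      ∑ F : κ → Option (ι × ι), (∏ j, termCoeff a c (B j) (F j)) *
        ∏ i, (radialWeight b (univ.map e) i ‖α i‖ : ℂ) *
          (α i ^ choiceDeg Prod.fst F i * conj (α i) ^ choiceDeg Prod.snd F i) := by
  have hreal : gaussianFormIntegrand b a c e (fun j α => ∑ i, α i * B j i) α =
      (∏ i, radialWeight b (univ.map e) i ‖α i‖) * ∏ j, (a * ‖∑ i, α i * B j i‖ ^ 2 - c) := by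
    rw [gaussianFormIntegrand, ← exp_mul_prod_eq_prod_radialWeight]
    ring
  rw [hreal, Complex.ofReal_mul, Complex.ofReal_prod, Complex.ofReal_prod]
  simp only [ofReal_mul_norm_sq_sub_eq_sum, Fintype.prod_sum, mul_sum]
  refine sum_congr rfl fun F _ => ?_
  simp only [prod_mul_distrib, prod_termMonomial]
  ring

theorem ofReal_integral_gaussianFormIntegrand_eq_sum {b : ℝ} (hb : 0 < b) (a c : ℝ) (e : κ ↪ ι)
    (B : κ → ι → ℂ) :
    ((∫ α, gaussianFormIntegrand b a c e (fun j α => ∑ i, α i * B j i) α : ℝ) : ℂ) =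
      ∑ F : κ → Option (ι × ι), (∏ j, termCoeff a c (B j) (F j)) *
        ∏ i, coordMoment b (univ.map e) i (choiceDeg Prod.fst F i) (choiceDeg Prod.snd F i) := by
  have hint : ∀ F : κ → Option (ι × ι), Integrable (fun α : ι → ℂ =>
      ∏ i, (radialWeight b (univ.map e) i ‖α i‖ : ℂ) *
        (α i ^ choiceDeg Prod.fst F i * conj (α i) ^ choiceDeg Prod.snd F i)) :=
    fun F => Integrable.fintype_prod fun i =>
      integrable_radialWeight_mul_pow_mul_conj_pow hb _ _ _ _
  rw [← integral_complex_ofReal]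
  simp only [ofReal_gaussianFormIntegrand_eq_sum]
  rw [integral_finsetSum _ fun F _ => (hint F).const_mul _]
  refine sum_congr rfl fun F _ => ?_
  rw [integral_const_mul, volume_pi]
  exact congrArg _ (integral_fintype_prod_eq_prod fun i (z : ℂ) =>
    (radialWeight b (univ.map e) i ‖z‖ : ℂ) *
      (z ^ choiceDeg Prod.fst F i * conj z ^ choiceDeg Prod.snd F i))

end Expansion

theorem Finset.mem_of_sum_le_card {ι : Type*} [Fintype ι] [DecidableEq ι] {f : ι → ℕ}
    {S : Finset ι} (hsum : ∑ i, f i ≤ #S) (hS : ∀ i ∈ S, 1 ≤ f i) {i : ι} (hi : f i ≠ 0) :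
    i ∈ S := by
  by_contra hiS
  have hle : ∑ k ∈ insert i S, f k ≤ ∑ k, f k := sum_le_sum_of_subset (subset_univ _)
  have hS' : #S ≤ ∑ k ∈ S, f k := by simpa using sum_le_sum hS
  rw [sum_insert hiS] at hle
  omega

section Support

variable {ι κ : Type*} [Fintype ι] [Fintype κ] [DecidableEq ι]

theorem sum_choiceDeg_le (π : ι × ι → ι) (F : κ → Option (ι × ι)) :
    ∑ i, choiceDeg π F i ≤ Fintype.card κ := by
  have h := card_eq_sum_card_fiberwise (f := fun j => (F j).map π) (s := univ) (t := univ)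
    (fun j _ => mem_univ _)
  rw [card_univ, Fintype.sum_option] at h
  unfold choiceDeg
  omega

theorem mem_map_of_prod_coordMoment_ne_zero {b : ℝ} (hb : 0 < b) (e : κ ↪ ι)
    {F : κ → Option (ι × ι)}
    (hF : ∏ i, coordMoment b (univ.map e) i (choiceDeg Prod.fst F i) (choiceDeg Prod.snd F i) ≠ 0)
    {j : κ} {k l : ι} (hj : F j = some (k, l)) : k ∈ univ.map e ∧ l ∈ univ.map e := by
  have hne i := prod_ne_zero_iff.mp hF i (mem_univ i)
  have hdeg i : choiceDeg Prod.fst F i = choiceDeg Prod.snd F i :=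
    not_not.mp fun h => hne i (coordMoment_eq_zero_of_ne b _ i h)
  have hhead : ∀ i ∈ univ.map e, 1 ≤ choiceDeg Prod.fst F i := fun i hi =>
    Nat.one_le_iff_ne_zero.mpr fun h0 =>
      hne i (by rw [← hdeg, h0]; exact coordMoment_zero_zero_of_mem hb hi)
  -- the factors have total degree at most `card κ = #(univ.map e)`, while every coordinate in
  -- `univ.map e` needs degree at least one
  have hsupp (π : ι × ι → ι) (hπ : ∀ i ∈ univ.map e, 1 ≤ choiceDeg π F i) :
      π (k, l) ∈ univ.map e := by
    refine mem_of_sum_le_card ?_ hπ (card_pos.mpr ⟨j, by simp [hj]⟩).ne'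
    rw [card_map, card_univ]
    exact sum_choiceDeg_le π F
  exact ⟨hsupp Prod.fst hhead, hsupp Prod.snd fun i hi => hdeg i ▸ hhead i hi⟩

end Support

variable {ι κ : Type*} [Fintype ι] [Fintype κ]

theorem integral_gaussianFormIntegrand_congr {b : ℝ} (hb : 0 < b) (a c : ℝ) (e : κ ↪ ι)
    {B B' : κ → ι → ℂ} (h : ∀ j k, B j (e k) = B' j (e k)) :
    ∫ α, gaussianFormIntegrand b a c e (fun j α => ∑ i, α i * B j i) α =
      ∫ α, gaussianFormIntegrand b a c e (fun j α => ∑ i, α i * B' j i) α := by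
  classical
  rw [← Complex.ofReal_inj, ofReal_integral_gaussianFormIntegrand_eq_sum hb,
    ofReal_integral_gaussianFormIntegrand_eq_sum hb]
  refine sum_congr rfl fun F _ => ?_
  by_cases hF :
      ∏ i, coordMoment b (univ.map e) i (choiceDeg Prod.fst F i) (choiceDeg Prod.snd F i) = 0
  · rw [hF, mul_zero, mul_zero]
  refine congrArg (· * _) (prod_congr rfl fun j _ => ?_)
  match hj : F j with
  | none => rfl
  | some (k, l) =>
    obtain ⟨hk, hl⟩ := mem_map_of_prod_coordMoment_ne_zero hb e hF hj
    obtain ⟨k, -, rfl⟩ := mem_map.mp hk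
    obtain ⟨l, -, rfl⟩ := mem_map.mp hl
    simp only [termCoeff, h]

theorem integral_gaussianFormIntegrand_truncate {b : ℝ} (hb : 0 < b) (a c : ℝ) (e : κ ↪ ι)
    (B : κ → ι → ℂ) :
    ∫ α, gaussianFormIntegrand b a c e (fun j α => ∑ i, α i * B j i) α =
      ∫ α, gaussianFormIntegrand b a c e (fun j α => ∑ k, α (e k) * B j (e k)) α := by
  classical
  have hsum j (α : ι → ℂ) :
      ∑ k, α (e k) * B j (e k) = ∑ i, α i * if i ∈ univ.map e then B j i else 0 := by
    simp only [mul_ite, mul_zero, sum_ite_mem, univ_inter, sum_map]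
  simp only [hsum]
  exact integral_gaussianFormIntegrand_congr hb a c e fun j k => by simp

theorem integral_truncate_sum_general (m n : ℕ) (hnm : n ≤ m)
    (U : Matrix (Fin m) (Fin m) ℂ) :
    (∫ α : Fin m → ℂ,
        Real.exp (-2 * ∑ j, ‖α j‖ ^ 2) *
          (∏ j : Fin n, (4 * ‖∑ k, α k * U k (Fin.castLE hnm j)‖ ^ 2 - 1)) *
          ∏ j : Fin n, (‖α (Fin.castLE hnm j)‖ ^ 2 - 1 / 2)) =
    ∫ α : Fin m → ℂ,
        Real.exp (-2 * ∑ j, ‖α j‖ ^ 2) *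
          (∏ j : Fin n, (4 * ‖
              (∑ k : Fin n, α (Fin.castLE hnm k) * U (Fin.castLE hnm k) (Fin.castLE hnm j))‖ ^ 2
            - 1)) *
          ∏ j : Fin n, (‖α (Fin.castLE hnm j)‖ ^ 2 - 1 / 2) :=
  integral_gaussianFormIntegrand_truncate two_pos 4 1 (Fin.castLEEmb hnm)
    fun j k => U k (Fin.castLE hnm j)

/-- For `n ≤ m` and an `m × m` unitary `U`, in the integral
`∫_{ℂ^m} exp(−2 ∑ |α_j|²) · ∏_{j<n} (4|∑_k α_k U_{k,j}|² − 1) · ∏_{j<n} (|α_j|² − 1/2) d²α`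
the inner sums over `k` may be truncated from `m` to `n` without changing the value. -/
theorem integral_truncate_sum (m n : ℕ) (hm : 0 < m) (hn : 0 < n) (hnm : n ≤ m)
    (U : Matrix (Fin m) (Fin m) ℂ) (hU : U * U.conjTranspose = 1) :
    (∫ α : Fin m → ℂ,
        Real.exp (-2 * ∑ j, ‖α j‖ ^ 2) *
          (∏ j : Fin n, (4 * ‖∑ k, α k * U k (Fin.castLE hnm j)‖ ^ 2 - 1)) *
          ∏ j : Fin n, (‖α (Fin.castLE hnm j)‖ ^ 2 - 1 / 2)) =
    ∫ α : Fin m → ℂ,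
        Real.exp (-2 * ∑ j, ‖α j‖ ^ 2) *
          (∏ j : Fin n, (4 * ‖
              (∑ k : Fin n, α (Fin.castLE hnm k) * U (Fin.castLE hnm k) (Fin.castLE hnm j))‖ ^ 2
            - 1)) *
          ∏ j : Fin n, (‖α (Fin.castLE hnm j)‖ ^ 2 - 1 / 2) :=
  integral_truncate_sum_general m n hnm U
end

section
/- Let n be a positive integer and let A be any n × n complex matrix. Then ∫_{ℂ^n} exp(−2 ∑_{j=1}^n |α_j|²) · ∏_{j=1}^n (4·|∑_{k=1}^n α_k A_{k,j}|² − 1) · ∏_{j=1}^n (|α_j|² − 1/2) d²α = 4^n · ∫_{ℂ^n} exp(−2 ∑_{j=1}^n |α_j|²) · ∏_{j=1}^n |∑_{k=1}^n α_k A_{k,j}|² · ∏_{j=1}^n (|α_j|² − 1/2) d²α; that is, replacing each factor (4·|·|² − 1) by 4·|·|² does not change the value of the integral. -/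
open MeasureTheory

/-!
Put `w(z) = e^{-2|z|²} (|z|² - 1/2)` and `Lⱼ(α) = ∑ₖ αₖ Aₖⱼ`. Expanding `∏ⱼ (4|Lⱼ|² - 1)` over
the set `S` of factors that keep their `4|Lⱼ|²`, the term of a proper subset `S` is a combination
of monomials `∏ₖ αₖ^{aₖ} ᾱₖ^{bₖ}` with `∑ₖ aₖ = |S| < n`, so some `aₖ = 0`. Against the product
weight `∏ₖ w(αₖ)` such a monomial integrates to `0`: the integral factorises over the coordinates,
and `∫ w(z) z̄^b dz = 0`, by rotation invariance when `b > 0` and because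
`∫ |z|² e^{-2|z|²} = π/4 = ½ ∫ e^{-2|z|²}` when `b = 0`.
-/

open Real Finset ComplexConjugate

namespace DropMinusOne

noncomputable def weight (z : ℂ) : ℝ := rexp (-2 * ‖z‖ ^ 2) * (‖z‖ ^ 2 - 1 / 2)

lemma integral_norm_pow_mul_exp_neg_mul_sq {b : ℝ} (hb : 0 < b) (q : ℕ) :
    ∫ z : ℂ, ‖z‖ ^ q * rexp (-b * ‖z‖ ^ 2) =
      π * b ^ (-((q : ℝ) + 2) / 2) * Gamma (((q : ℝ) + 2) / 2) := by
  have h := Complex.integral_rpow_mul_exp_neg_mul_rpow one_le_two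
    (by linarith [q.cast_nonneg (α := ℝ)] : -2 < (q : ℝ)) hb
  simp only [rpow_natCast, rpow_two] at h
  rw [h]
  ring

lemma integrable_norm_pow_mul_exp_neg_mul_sq {b : ℝ} (hb : 0 < b) (q : ℕ) :
    Integrable fun z : ℂ => ‖z‖ ^ q * rexp (-b * ‖z‖ ^ 2) := by
  refine Integrable.of_integral_ne_zero ?_
  rw [integral_norm_pow_mul_exp_neg_mul_sq hb]
  have := Gamma_pos_of_pos (by positivity : (0 : ℝ) < ((q : ℝ) + 2) / 2)
  positivity

lemma integral_weight : ∫ z : ℂ, weight z = 0 := by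
  have hsplit : weight = fun z : ℂ =>
      ‖z‖ ^ 2 * rexp (-2 * ‖z‖ ^ 2) - 1 / 2 * (‖z‖ ^ 0 * rexp (-2 * ‖z‖ ^ 2)) := by
    ext z; simp only [weight]; ring
  rw [hsplit, integral_sub (integrable_norm_pow_mul_exp_neg_mul_sq two_pos 2)
    ((integrable_norm_pow_mul_exp_neg_mul_sq two_pos 0).const_mul _), integral_const_mul,
    integral_norm_pow_mul_exp_neg_mul_sq two_pos, integral_norm_pow_mul_exp_neg_mul_sq two_pos]
  norm_num [Gamma_two, Gamma_one]
  ring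

lemma integrable_weight_mul_pow_mul_conj_pow (a b : ℕ) :
    Integrable fun z : ℂ => (weight z : ℂ) * z ^ a * conj z ^ b := by
  refine ((integrable_norm_pow_mul_exp_neg_mul_sq two_pos (a + b + 2)).add
    ((integrable_norm_pow_mul_exp_neg_mul_sq two_pos (a + b)).const_mul (1 / 2))).mono' ?_ ?_
  · unfold weight; fun_prop
  · refine .of_forall fun z => ?_
    have hw : |‖z‖ ^ 2 - 1 / 2| ≤ ‖z‖ ^ 2 + 1 / 2 :=
      abs_sub_le_iff.2 ⟨by linarith, by linarith [sq_nonneg ‖z‖]⟩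
    simp only [norm_mul, norm_pow, Complex.norm_conj, Complex.norm_real, Real.norm_eq_abs,
      weight, abs_exp, Pi.add_apply]
    calc rexp (-2 * ‖z‖ ^ 2) * |‖z‖ ^ 2 - 1 / 2| * ‖z‖ ^ a * ‖z‖ ^ b
        ≤ rexp (-2 * ‖z‖ ^ 2) * (‖z‖ ^ 2 + 1 / 2) * ‖z‖ ^ a * ‖z‖ ^ b := by gcongr
      _ = _ := by ring

lemma integral_radial_mul_conj_pow_eq_zero (f : ℝ → ℂ) {b : ℕ} (hb : b ≠ 0) :
    ∫ z : ℂ, f ‖z‖ * conj z ^ b = 0 := by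
  set ω : Circle := Circle.exp (π / b)
  have hω : (ω : ℂ) ^ b = -1 := by
    rw [Circle.coe_exp, ← Complex.exp_nat_mul, ← Complex.exp_pi_mul_I]
    congr 1
    push_cast
    field_simp
  have hconj : conj (ω : ℂ) ^ b = -1 := by rw [← map_pow, hω, map_neg, map_one]
  have hrot := integral_comp (rotation ω) fun z => f ‖z‖ * conj z ^ b
  simp only [rotation_apply, norm_mul, Circle.norm_coe, one_mul, map_mul, mul_pow] at hrot
  simp_rw [mul_left_comm _ (conj (ω : ℂ) ^ b), hconj, integral_const_mul] at hrot
  linear_combination -hrot / 2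

lemma integral_weight_mul_conj_pow (b : ℕ) : ∫ z : ℂ, (weight z : ℂ) * conj z ^ b = 0 := by
  rcases eq_or_ne b 0 with rfl | hb
  · simp [integral_complex_ofReal, integral_weight]
  · exact integral_radial_mul_conj_pow_eq_zero
      (fun r => ((rexp (-2 * r ^ 2) * (r ^ 2 - 1 / 2) : ℝ) : ℂ)) hb

lemma prod_mul_sub_one {ι R : Type*} [CommRing R] [DecidableEq ι] (s : Finset ι) (c : R)
    (x : ι → R) :
    ∏ i ∈ s, (c * x i - 1) = ∑ t ∈ s.powerset, (-1) ^ #t * c ^ #(s \ t) * ∏ i ∈ s \ t, x i := by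
  rw [prod_sub (fun i => c * x i) (fun _ => 1) s]
  simp only [prod_const_one, mul_one, prod_mul_distrib, prod_const, mul_assoc]

variable {κ : Type*} [Fintype κ]

lemma prod_sum_mul_eq_sum_prod_pow {ι R : Type*} [Fintype ι] [DecidableEq ι] [DecidableEq κ]
    [CommSemiring R] (x : κ → R) (B : κ → ι → R) :
    ∏ i, ∑ k, x k * B k i = ∑ u : ι → κ, (∏ i, B (u i) i) * ∏ k, x k ^ #{i | u i = k} := by
  rw [prod_univ_sum, Fintype.piFinset_univ]
  refine sum_congr rfl fun u _ => ?_
  rw [prod_mul_distrib, mul_comm, ← prod_fiberwise' univ u x]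
  simp only [prod_const]

lemma exp_mul_prod_eq_prod_weight (α : κ → ℂ) :
    rexp (-2 * ∑ k, ‖α k‖ ^ 2) * ∏ k, (‖α k‖ ^ 2 - 1 / 2) = ∏ k, weight (α k) := by
  rw [mul_sum, exp_sum, ← prod_mul_distrib]
  rfl

lemma integrable_prod_weight_mul_pow_mul_conj_pow (a b : κ → ℕ) :
    Integrable fun α : κ → ℂ => ∏ k, (weight (α k) : ℂ) * α k ^ a k * conj (α k) ^ b k :=
  Integrable.fintype_prod (f := fun k z => (weight z : ℂ) * z ^ a k * conj z ^ b k)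
    fun k => integrable_weight_mul_pow_mul_conj_pow (a k) (b k)

lemma integral_prod_weight_mul_pow_mul_conj_pow_eq_zero {a : κ → ℕ} (b : κ → ℕ) {k : κ}
    (hk : a k = 0) :
    ∫ α : κ → ℂ, ∏ k, (weight (α k) : ℂ) * α k ^ a k * conj (α k) ^ b k = 0 := by
  rw [integral_fintype_prod_volume_eq_prod
    (fun k z => (weight z : ℂ) * z ^ a k * conj z ^ b k)]
  exact prod_eq_zero (mem_univ k) (by simpa [hk] using integral_weight_mul_conj_pow (b k))

lemma prod_weight_mul_prod_norm_sq_eq_sum {ι : Type*} [Fintype ι] [DecidableEq ι] [DecidableEq κ]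
    (B : κ → ι → ℂ) (α : κ → ℂ) :
    (((∏ k, weight (α k)) * ∏ i, ‖∑ k, α k * B k i‖ ^ 2 : ℝ) : ℂ) =
      ∑ u : ι → κ, ∑ v : ι → κ, (∏ i, B (u i) i) * conj (∏ i, B (v i) i) *
        ∏ k, (weight (α k) : ℂ) * α k ^ #{i | u i = k} * conj (α k) ^ #{i | v i = k} := by
  have hnorm : ∏ i, (‖∑ k, α k * B k i‖ : ℂ) ^ 2 =
      (∏ i, ∑ k, α k * B k i) * conj (∏ i, ∑ k, α k * B k i) := by
    simp only [map_prod, ← prod_mul_distrib, Complex.mul_conj']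
  push_cast
  rw [hnorm, prod_sum_mul_eq_sum_prod_pow, map_sum, sum_mul_sum, mul_sum]
  refine sum_congr rfl fun u _ => ?_
  rw [mul_sum]
  refine sum_congr rfl fun v _ => ?_
  simp only [map_mul, map_prod, map_pow, prod_mul_distrib]
  ring

lemma integrable_prod_weight_mul_prod_norm_sq {ι : Type*} (B : κ → ι → ℂ) (S : Finset ι) :
    Integrable fun α : κ → ℂ => (∏ k, weight (α k)) * ∏ i ∈ S, ‖∑ k, α k * B k i‖ ^ 2 := by
  classical
  have h : Integrable fun α : κ → ℂ =>
      (((∏ k, weight (α k)) * ∏ i : S, ‖∑ k, α k * B k i‖ ^ 2 : ℝ) : ℂ) := by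
    simp_rw [prod_weight_mul_prod_norm_sq_eq_sum]
    exact integrable_finsetSum _ fun u _ => integrable_finsetSum _ fun v _ =>
      (integrable_prod_weight_mul_pow_mul_conj_pow _ _).const_mul _
  simp_rw [← prod_coe_sort S]
  simpa only [RCLike.re_to_complex, Complex.ofReal_re] using h.re

lemma integral_prod_weight_mul_prod_norm_sq_eq_zero {ι : Type*} (B : κ → ι → ℂ) {S : Finset ι}
    (hS : #S < Fintype.card κ) :
    ∫ α : κ → ℂ, (∏ k, weight (α k)) * ∏ i ∈ S, ‖∑ k, α k * B k i‖ ^ 2 = 0 := by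
  classical
  simp_rw [← prod_coe_sort S, ← Complex.ofReal_inj, ← integral_complex_ofReal,
    Complex.ofReal_zero, prod_weight_mul_prod_norm_sq_eq_sum]
  rw [integral_finsetSum _ fun u _ => integrable_finsetSum _ fun v _ =>
    (integrable_prod_weight_mul_pow_mul_conj_pow _ _).const_mul _]
  refine sum_eq_zero fun u _ => ?_
  obtain ⟨k, hk⟩ : ∃ k, ∀ i, u i ≠ k := by
    by_contra! hu
    exact hS.not_ge <| Fintype.card_coe S ▸
      Fintype.card_le_of_surjective u fun k => (hu k).imp fun _ => id
  rw [integral_finsetSum _ fun v _ =>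
    (integrable_prod_weight_mul_pow_mul_conj_pow _ _).const_mul _]
  refine sum_eq_zero fun v _ => ?_
  rw [integral_const_mul, integral_prod_weight_mul_pow_mul_conj_pow_eq_zero _ (k := k)
    (by simpa [filter_eq_empty_iff] using hk), mul_zero]

end DropMinusOne

open DropMinusOne in
theorem integral_drop_minus_one_general (n : ℕ) (A : Matrix (Fin n) (Fin n) ℂ) :
    (∫ α : Fin n → ℂ,
        Real.exp (-2 * ∑ j, ‖α j‖ ^ 2) *
          (∏ j, (4 * ‖∑ k, α k * A k j‖ ^ 2 - 1)) *
          ∏ j, (‖α j‖ ^ 2 - 1 / 2)) =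
    4 ^ n *
      ∫ α : Fin n → ℂ,
        Real.exp (-2 * ∑ j, ‖α j‖ ^ 2) *
          (∏ j, ‖∑ k, α k * A k j‖ ^ 2) *
          ∏ j, (‖α j‖ ^ 2 - 1 / 2) := by
  simp_rw [mul_right_comm (rexp _), exp_mul_prod_eq_prod_weight, prod_mul_sub_one, mul_sum,
    mul_left_comm (∏ k, weight _)]
  rw [integral_finsetSum _ fun t _ => (integrable_prod_weight_mul_prod_norm_sq A _).const_mul _,
    sum_eq_single_of_mem ∅ (empty_mem_powerset _) fun t _ ht => by
      rw [integral_const_mul, integral_prod_weight_mul_prod_norm_sq_eq_zero A, mul_zero]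
      simpa using card_lt_card (sdiff_ssubset (subset_univ t) (nonempty_iff_ne_empty.2 ht))]
  simp [integral_const_mul]

/-- For any `n × n` complex matrix `A`, replacing each factor `(4|·|² − 1)` by `4|·|²` in the
integral `∫_{ℂ^n} exp(−2 ∑ |α_j|²) · ∏_j (4|∑_k α_k A_{k,j}|² − 1) · ∏_j (|α_j|² − 1/2) d²α`
does not change its value. -/
theorem integral_drop_minus_one (n : ℕ) (hn : 0 < n) (A : Matrix (Fin n) (Fin n) ℂ) :
    (∫ α : Fin n → ℂ,
        Real.exp (-2 * ∑ j, ‖α j‖ ^ 2) *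
          (∏ j, (4 * ‖∑ k, α k * A k j‖ ^ 2 - 1)) *
          ∏ j, (‖α j‖ ^ 2 - 1 / 2)) =
    4 ^ n *
      ∫ α : Fin n → ℂ,
        Real.exp (-2 * ∑ j, ‖α j‖ ^ 2) *
          (∏ j, ‖∑ k, α k * A k j‖ ^ 2) *
          ∏ j, (‖α j‖ ^ 2 - 1 / 2) :=
  integral_drop_minus_one_general n A
end
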